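/- Let m be a positive odd integer and let α, β be real numbers with 0 < α ≤ β. Then for every t ∈ (1,∞), ψ^(m)(α+t)/ψ^(m)(β+t) ≤ ψ^(m)(α+1)/ψ^(m)(β+1). -/

import Mathlib

/-- The digamma (psi) function: logarithmic derivative of the Gamma function. -/
noncomputable def psi (t : ℝ) : ℝ := deriv Real.Gamma t / Real.Gamma t

open Set Filter Topology

/-! For `x > 0`, `ψ = (log ∘ Γ)'` is monotone because `log ∘ Γ` is convex, and it satisfies
`ψ (x + 1) = ψ x + 1 / x`, as does the series `∑ (1 / (n + 1) - 1 / (n + x))`. Two monotone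
solutions of this recurrence differ by a constant (their difference is 1-periodic and varies by
`O(1 / N)` near `N`), which identifies `ψ` with the series and gives
`ψ⁽ᵐ⁾ x = (-1)^(m+1) m! ζ(m + 1, x)`, `ζ(p, x) = ∑ 1 / (n + x)^p`.
By Cauchy–Schwarz `ζ(p + 1, x)² ≤ ζ(p, x) ζ(p + 2, x)`, so `h = ζ(p, ·)` is log-convex, i.e.
`h' / h` is nondecreasing. Then `s ↦ h (α + s) / h (β + s)` is nonincreasing for `α ≤ β`, its
logarithmic derivative being `(h' / h) (α + s) - (h' / h) (β + s) ≤ 0`. -/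

theorem tsum_sq_le_tsum_mul_tsum_of_sq_le_mul {ι : Type*} {r f g : ι → ℝ} (hr : Summable r)
    (hf : Summable f) (hg : Summable g) (hf₀ : ∀ i, 0 ≤ f i) (hg₀ : ∀ i, 0 ≤ g i)
    (hrfg : ∀ i, r i ^ 2 ≤ f i * g i) : (∑' i, r i) ^ 2 ≤ (∑' i, f i) * ∑' i, g i := by
  refine le_of_tendsto' (hr.hasSum.pow 2) fun s => ?_
  calc (∑ i ∈ s, r i) ^ 2 ≤ (∑ i ∈ s, f i) * ∑ i ∈ s, g i :=
        Finset.sum_sq_le_sum_mul_sum_of_sq_le_mul s (fun i _ => hf₀ i) (fun i _ => hg₀ i)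
          fun i _ => hrfg i
    _ ≤ (∑' i, f i) * ∑' i, g i :=
        mul_le_mul (hf.sum_le_tsum s fun i _ => hf₀ i) (hg.sum_le_tsum s fun i _ => hg₀ i)
          (Finset.sum_nonneg fun i _ => hg₀ i) (tsum_nonneg hf₀)

theorem monotoneOn_div_of_sq_le_mul {h h' h'' : ℝ → ℝ} (hpos : ∀ x > 0, 0 < h x)
    (hd : ∀ x > 0, HasDerivAt h (h' x) x) (hd' : ∀ x > 0, HasDerivAt h' (h'' x) x)
    (hlogconv : ∀ x > 0, h' x ^ 2 ≤ h x * h'' x) : MonotoneOn (fun x => h' x / h x) (Ioi 0) := by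
  have hq : ∀ x > 0, HasDerivAt (fun x => h' x / h x)
      ((h'' x * h x - h' x * h' x) / h x ^ 2) x := fun x hx =>
    (hd' x hx).fun_div (hd x hx) (hpos x hx).ne'
  refine monotoneOn_of_hasDerivWithinAt_nonneg
    (f' := fun x => (h'' x * h x - h' x * h' x) / h x ^ 2) (convex_Ioi 0)
    (fun x hx => (hq x hx).continuousAt.continuousWithinAt) (fun x hx => ?_) fun x hx => ?_
  all_goals rw [interior_Ioi] at hx
  · exact (hq x hx).hasDerivWithinAt
  · exact div_nonneg (by nlinarith [hlogconv x hx]) (sq_nonneg _)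

theorem antitoneOn_div_comp_add {h h' : ℝ → ℝ} (hpos : ∀ x > 0, 0 < h x)
    (hd : ∀ x > 0, HasDerivAt h (h' x) x) (hmono : MonotoneOn (fun x => h' x / h x) (Ioi 0))
    {α β : ℝ} (hαβ : α ≤ β) : AntitoneOn (fun s => h (α + s) / h (β + s)) (Ioi (-α)) := by
  have hq : ∀ s ∈ Ioi (-α), HasDerivAt (fun s => h (α + s) / h (β + s))
      ((h' (α + s) * h (β + s) - h (α + s) * h' (β + s)) / h (β + s) ^ 2) s := by
    intro s hs
    have hβs : 0 < β + s := by linarith [mem_Ioi.1 hs]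
    exact ((hd _ (by linarith [mem_Ioi.1 hs])).comp_const_add α s).fun_div
      ((hd _ hβs).comp_const_add β s) (hpos _ hβs).ne'
  refine antitoneOn_of_hasDerivWithinAt_nonpos
    (f' := fun s => (h' (α + s) * h (β + s) - h (α + s) * h' (β + s)) / h (β + s) ^ 2)
    (convex_Ioi _)
    (fun s hs => (hq s hs).continuousAt.continuousWithinAt) (fun s hs => ?_) fun s hs => ?_
  all_goals rw [interior_Ioi] at hs
  · exact (hq s hs).hasDerivWithinAt
  · have hαs : 0 < α + s := by linarith [mem_Ioi.1 hs]
    have hβs : 0 < β + s := by linarith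
    have hle := hmono hαs hβs (by linarith)
    rw [div_le_div_iff₀ (hpos _ hαs) (hpos _ hβs)] at hle
    exact div_nonpos_of_nonpos_of_nonneg (by linarith [mul_comm (h (α + s)) (h' (β + s))])
      (sq_nonneg _)

theorem Antitone.hasSum_sub_succ {f : ℕ → ℝ} (hf : Antitone f) (hlim : Tendsto f atTop (𝓝 0)) :
    HasSum (fun n => f n - f (n + 1)) (f 0) := by
  rw [hasSum_iff_tendsto_nat_of_nonneg fun n => sub_nonneg.2 (hf n.le_succ)]
  simp_rw [Finset.sum_range_sub']
  simpa using tendsto_const_nhds.sub hlim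

theorem add_nat_eq_add_sum {F : ℝ → ℝ} (hrec : ∀ x > 0, F (x + 1) = F x + 1 / x) {x : ℝ}
    (hx : 0 < x) (N : ℕ) :
    F (x + N) = F x + ∑ j ∈ Finset.range N, 1 / (x + j) := by
  induction N with
  | zero => simp
  | succ N ih =>
    rw [Nat.cast_succ, ← add_assoc, hrec _ (by positivity), ih, Finset.sum_range_succ, add_assoc]

theorem sub_le_div_of_mem_Icc {F : ℝ → ℝ} (hrec : ∀ x > 0, F (x + 1) = F x + 1 / x)
    (hmono : MonotoneOn F (Ioi 0)) {N : ℕ} (hN : 0 < N) (K : ℕ) {a b : ℝ}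
    (ha : a ∈ Icc (N : ℝ) (N + K)) (hb : b ∈ Icc (N : ℝ) (N + K)) :
    F a - F b ≤ K / N := by
  have hN' : (0 : ℝ) < N := by exact_mod_cast hN
  have hsum : ∑ j ∈ Finset.range K, 1 / ((N : ℝ) + j) ≤ K / N := by
    calc ∑ j ∈ Finset.range K, 1 / ((N : ℝ) + j) ≤ ∑ _j ∈ Finset.range K, 1 / (N : ℝ) :=
          Finset.sum_le_sum fun j _ => one_div_le_one_div_of_le hN' (by simp)
      _ = K / N := by simp [div_eq_mul_inv]
  have hmem : ∀ y ∈ Icc (N : ℝ) (N + K), y ∈ Ioi (0 : ℝ) := fun y hy =>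
    mem_Ioi.2 (hN'.trans_le hy.1)
  have hup := hmono (hmem a ha) (hmem _ ⟨by simp, le_rfl⟩) ha.2
  have hlow := hmono (hmem _ ⟨le_rfl, by simp⟩) (hmem b hb) hb.1
  rw [add_nat_eq_add_sum hrec hN'] at hup
  linarith

theorem sub_eq_sub_of_monotoneOn_of_add_one {F G : ℝ → ℝ} (hF : MonotoneOn F (Ioi 0))
    (hG : MonotoneOn G (Ioi 0)) (hFrec : ∀ x > 0, F (x + 1) = F x + 1 / x)
    (hGrec : ∀ x > 0, G (x + 1) = G x + 1 / x) {x : ℝ} (hx : 0 < x) :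
    F x - G x = F 1 - G 1 := by
  set K := ⌈x⌉₊
  have hxK : x ≤ K := Nat.le_ceil x
  have hK : (1 : ℝ) ≤ K := by exact_mod_cast Nat.ceil_pos.2 hx
  have hbound : ∀ N : ℕ, 0 < N → |(F x - G x) - (F 1 - G 1)| ≤ 2 * K / N := by
    intro N hN
    have hN' : (0 : ℝ) < N := by exact_mod_cast hN
    have hxN : x + (N : ℝ) ∈ Icc (N : ℝ) (N + K) := ⟨by linarith, by linarith⟩
    have h1N : 1 + (N : ℝ) ∈ Icc (N : ℝ) (N + K) := ⟨by linarith, by linarith⟩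
    -- `F - G` is 1-periodic, while on `[N, N + K]` both `F` and `G` vary by at most `K / N`.
    have hshift : (F x - G x) - (F 1 - G 1) =
        (F (x + N) - F (1 + N)) - (G (x + N) - G (1 + N)) := by
      rw [add_nat_eq_add_sum hFrec hx, add_nat_eq_add_sum hFrec one_pos,
        add_nat_eq_add_sum hGrec hx, add_nat_eq_add_sum hGrec one_pos]
      ring
    rw [hshift, abs_le]
    have htwo : 2 * (K : ℝ) / N = K / N + K / N := by ring
    constructor <;> linarith [sub_le_div_of_mem_Icc hFrec hF hN K hxN h1N,
      sub_le_div_of_mem_Icc hFrec hF hN K h1N hxN, sub_le_div_of_mem_Icc hGrec hG hN K hxN h1N,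
      sub_le_div_of_mem_Icc hGrec hG hN K h1N hxN]
  have hzero : |(F x - G x) - (F 1 - G 1)| ≤ 0 :=
    ge_of_tendsto (tendsto_const_div_atTop_nhds_zero_nat _)
      ((eventually_gt_atTop 0).mono hbound)
  linarith [abs_le.1 hzero]

noncomputable def hurwitzSeries (p : ℕ) (x : ℝ) : ℝ := ∑' n : ℕ, 1 / ((n : ℝ) + x) ^ p

theorem summable_one_div_nat_add_pow {p : ℕ} (hp : 2 ≤ p) {x : ℝ} (hx : 0 < x) :
    Summable fun n : ℕ => 1 / ((n : ℝ) + x) ^ p := by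
  refine ((Real.summable_one_div_nat_add_rpow x p).2 (by exact_mod_cast hp)).congr fun n => ?_
  rw [abs_of_pos (by positivity), Real.rpow_natCast]

theorem hurwitzSeries_pos {p : ℕ} (hp : 2 ≤ p) {x : ℝ} (hx : 0 < x) : 0 < hurwitzSeries p x :=
  (summable_one_div_nat_add_pow hp hx).tsum_pos (fun n => by positivity) 0 (by positivity)

theorem hasDerivAt_one_div_add_pow (p : ℕ) (c : ℝ) {y : ℝ} (hy : c + y ≠ 0) :
    HasDerivAt (fun z => 1 / (c + z) ^ p) (-p / (c + y) ^ (p + 1)) y := by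
  refine ((hasDerivAt_const y (1 : ℝ)).fun_div (((hasDerivAt_id' y).const_add c).fun_pow p)
    (pow_ne_zero p hy)).congr_deriv ?_
  rcases p with _ | p
  · simp
  · rw [Nat.add_sub_cancel]
    field_simp
    ring

theorem hasDerivAt_tsum_of_hasDerivAt_div_pow {g : ℕ → ℝ → ℝ} {q : ℕ} (hq : 2 ≤ q) (c : ℝ)
    (hg : ∀ n, ∀ y > 0, HasDerivAt (g n) (c / ((n : ℝ) + y) ^ q) y) {x : ℝ} (hx : 0 < x)
    (hsum : Summable fun n => g n x) :
    HasDerivAt (fun z => ∑' n, g n z) (c * hurwitzSeries q x) x := by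
  have hx2 : 0 < x / 2 := by linarith
  have hderiv := hasDerivAt_tsum_of_isPreconnected
    ((summable_one_div_nat_add_pow hq hx2).mul_left |c|) isOpen_Ioi isPreconnected_Ioi
    (fun n y hy => hg n y (hx2.trans hy)) (fun n y hy => ?_) (mem_Ioi.2 (by linarith)) hsum
    (mem_Ioi.2 (by linarith : x / 2 < x))
  · rwa [hurwitzSeries, ← tsum_mul_left, funext fun n => (mul_one_div c _)]
  · rw [norm_div, norm_pow, Real.norm_eq_abs, Real.norm_eq_abs, ← mul_one_div,
      abs_of_pos (by linarith [mem_Ioi.1 hy, n.cast_nonneg (α := ℝ)] : (0:ℝ) < n + y)]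
    gcongr
    exact (mem_Ioi.1 hy).le

theorem hasDerivAt_hurwitzSeries {p : ℕ} (hp : 2 ≤ p) {x : ℝ} (hx : 0 < x) :
    HasDerivAt (hurwitzSeries p) (-p * hurwitzSeries (p + 1) x) x :=
  hasDerivAt_tsum_of_hasDerivAt_div_pow (by omega) _
    (fun n y hy => hasDerivAt_one_div_add_pow p n (by positivity : (0 : ℝ) < n + y).ne')
    hx (summable_one_div_nat_add_pow hp hx)

theorem hurwitzSeries_sq_le_mul {p : ℕ} (hp : 2 ≤ p) {x : ℝ} (hx : 0 < x) :
    hurwitzSeries (p + 1) x ^ 2 ≤ hurwitzSeries p x * hurwitzSeries (p + 2) x :=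
  tsum_sq_le_tsum_mul_tsum_of_sq_le_mul (summable_one_div_nat_add_pow (by omega) hx)
    (summable_one_div_nat_add_pow hp hx) (summable_one_div_nat_add_pow (by omega) hx)
    (fun n => by positivity) (fun n => by positivity) fun n => by
      rw [div_mul_div_comm, one_mul, div_pow, one_pow, ← pow_mul, ← pow_add]
      exact le_of_eq (by ring_nf)

theorem antitoneOn_hurwitzSeries_div {p : ℕ} (hp : 2 ≤ p) {α β : ℝ} (hαβ : α ≤ β) :
    AntitoneOn (fun s => hurwitzSeries p (α + s) / hurwitzSeries p (β + s)) (Ioi (-α)) := by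
  have hd' : ∀ x > 0, HasDerivAt (fun x => -p * hurwitzSeries (p + 1) x)
      (p * (p + 1) * hurwitzSeries (p + 2) x) x := fun x hx =>
    ((hasDerivAt_hurwitzSeries (by omega) hx).const_mul _).congr_deriv (by push_cast; ring)
  have hlogconv : ∀ x > 0, (-p * hurwitzSeries (p + 1) x) ^ 2 ≤
      hurwitzSeries p x * (p * (p + 1) * hurwitzSeries (p + 2) x) := fun x hx => by
    have hcs := hurwitzSeries_sq_le_mul hp hx
    have hpos := mul_pos (hurwitzSeries_pos hp hx) (hurwitzSeries_pos (p := p + 2) (by omega) hx)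
    have hp0 : (0 : ℝ) ≤ p := p.cast_nonneg
    nlinarith [mul_le_mul_of_nonneg_left hcs (mul_nonneg hp0 hp0)]
  exact antitoneOn_div_comp_add (fun x hx => hurwitzSeries_pos hp hx)
    (fun x hx => hasDerivAt_hurwitzSeries hp hx)
    (monotoneOn_div_of_sq_le_mul (fun x hx => hurwitzSeries_pos hp hx)
      (fun x hx => hasDerivAt_hurwitzSeries hp hx) hd' hlogconv) hαβ

noncomputable def digammaSeries (x : ℝ) : ℝ := ∑' n : ℕ, (1 / ((n : ℝ) + 1) - 1 / ((n : ℝ) + x))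

theorem summable_digammaSeries {x : ℝ} (hx : 0 < x) :
    Summable fun n : ℕ => 1 / ((n : ℝ) + 1) - 1 / ((n : ℝ) + x) := by
  have hc : 0 < min 1 x := lt_min one_pos hx
  refine .of_norm_bounded ((summable_one_div_nat_add_pow le_rfl hc).mul_left |x - 1|) fun n => ?_
  have hprod : ((n : ℝ) + min 1 x) ^ 2 ≤ ((n : ℝ) + 1) * ((n : ℝ) + x) := by
    rw [sq]
    gcongr
    exacts [min_le_left _ _, min_le_right _ _]
  rw [div_sub_div _ _ (by positivity) (by positivity), Real.norm_eq_abs, abs_div,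
    abs_of_pos (by positivity : (0 : ℝ) < (n + 1) * (n + x)), mul_one_div,
    show 1 * ((n : ℝ) + x) - (n + 1) * 1 = x - 1 by ring]
  gcongr

theorem digammaSeries_add_one {x : ℝ} (hx : 0 < x) :
    digammaSeries (x + 1) = digammaSeries x + 1 / x := by
  have htel := Antitone.hasSum_sub_succ (f := fun n : ℕ => 1 / ((n : ℝ) + x))
    (fun a b hab => one_div_le_one_div_of_le (by positivity) (by gcongr))
    ((tendsto_atTop_add_const_right _ x tendsto_natCast_atTop_atTop).inv_tendsto_atTop.congr
      fun n => (one_div _).symm)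
  rw [digammaSeries, digammaSeries, ← sub_eq_iff_eq_add',
    ← (summable_digammaSeries (by linarith)).tsum_sub (summable_digammaSeries hx)]
  have hterm : ∀ n : ℕ, (1 / ((n : ℝ) + 1) - 1 / ((n : ℝ) + (x + 1))) -
      (1 / ((n : ℝ) + 1) - 1 / ((n : ℝ) + x)) = 1 / ((n : ℝ) + x) - 1 / (((n + 1 : ℕ) : ℝ) + x) :=
    fun n => by push_cast; ring
  simp_rw [hterm, htel.tsum_eq]
  simp

theorem monotoneOn_digammaSeries : MonotoneOn digammaSeries (Ioi 0) := fun a ha b hb hab =>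
  (summable_digammaSeries ha).tsum_le_tsum (fun n => by
    have : 1 / ((n : ℝ) + b) ≤ 1 / ((n : ℝ) + a) :=
      one_div_le_one_div_of_le (by positivity [mem_Ioi.1 ha]) (by linarith)
    linarith) (summable_digammaSeries hb)

theorem hasDerivAt_digammaSeries {x : ℝ} (hx : 0 < x) :
    HasDerivAt digammaSeries (hurwitzSeries 2 x) x := by
  have hterm : ∀ n : ℕ, ∀ y > 0, HasDerivAt (fun z => 1 / ((n : ℝ) + 1) - 1 / ((n : ℝ) + z))
      (1 / ((n : ℝ) + y) ^ 2) y := fun n y hy => by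
    have := (hasDerivAt_one_div_add_pow 1 n (by positivity : (0 : ℝ) < n + y).ne').const_sub
      (1 / ((n : ℝ) + 1))
    simp only [pow_one] at this
    exact this.congr_deriv (by ring)
  exact (hasDerivAt_tsum_of_hasDerivAt_div_pow le_rfl 1 hterm hx
    (summable_digammaSeries hx)).congr_deriv (one_mul _)

theorem differentiableAt_Gamma_of_pos {x : ℝ} (hx : 0 < x) : DifferentiableAt ℝ Real.Gamma x :=
  Real.differentiableAt_Gamma fun m => ((neg_nonpos.2 m.cast_nonneg).trans_lt hx).ne'

theorem differentiableAt_log_Gamma {x : ℝ} (hx : 0 < x) :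
    DifferentiableAt ℝ (Real.log ∘ Real.Gamma) x :=
  (differentiableAt_Gamma_of_pos hx).log (Real.Gamma_pos_of_pos hx).ne'

theorem deriv_log_Gamma {x : ℝ} (hx : 0 < x) : deriv (Real.log ∘ Real.Gamma) x = psi x := by
  rw [Function.comp_def, deriv.log (differentiableAt_Gamma_of_pos hx)
    (Real.Gamma_pos_of_pos hx).ne', psi]

theorem monotoneOn_psi : MonotoneOn psi (Ioi 0) := fun a ha b hb hab => by
  rw [← deriv_log_Gamma ha, ← deriv_log_Gamma hb]
  exact Real.convexOn_log_Gamma.monotoneOn_deriv (fun x hx => differentiableAt_log_Gamma hx)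
    ha hb hab

theorem psi_add_one {x : ℝ} (hx : 0 < x) : psi (x + 1) = psi x + 1 / x := by
  rw [← deriv_log_Gamma (by linarith : 0 < x + 1), ← deriv_log_Gamma hx, ← deriv_comp_add_const,
    one_div, ← Real.deriv_log,
    ← deriv_add (differentiableAt_log_Gamma hx) (Real.differentiableAt_log hx.ne')]
  refine EventuallyEq.deriv_eq ?_
  filter_upwards [eventually_gt_nhds hx] with y hy
  simp only [Pi.add_apply, Function.comp_apply, Real.Gamma_add_one hy.ne',
    Real.log_mul hy.ne' (Real.Gamma_pos_of_pos hy).ne']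
  ring

theorem psi_eq_digammaSeries_add {x : ℝ} (hx : 0 < x) : psi x = digammaSeries x + psi 1 := by
  have h := sub_eq_sub_of_monotoneOn_of_add_one monotoneOn_psi monotoneOn_digammaSeries
    (fun y hy => psi_add_one hy) (fun y hy => digammaSeries_add_one hy) hx
  have h1 : digammaSeries 1 = 0 := by simp [digammaSeries]
  linarith

theorem hasDerivAt_psi {x : ℝ} (hx : 0 < x) : HasDerivAt psi (hurwitzSeries 2 x) x :=
  ((hasDerivAt_digammaSeries hx).add_const (psi 1)).congr_of_eventuallyEq
    ((eventually_gt_nhds hx).mono fun _ hy => psi_eq_digammaSeries_add hy)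

theorem iteratedDeriv_psi {k : ℕ} (hk : 0 < k) {x : ℝ} (hx : 0 < x) :
    iteratedDeriv k psi x = (-1) ^ (k + 1) * k.factorial * hurwitzSeries (k + 1) x := by
  induction k, hk using Nat.le_induction generalizing x with
  | base => simp [iteratedDeriv_one, (hasDerivAt_psi hx).deriv]
  | succ k hk ih =>
    have heq : iteratedDeriv k psi =ᶠ[𝓝 x]
        fun y => (-1) ^ (k + 1) * k.factorial * hurwitzSeries (k + 1) y :=
      (eventually_gt_nhds hx).mono fun y hy => ih hy
    rw [iteratedDeriv_succ, heq.deriv_eq,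
      ((hasDerivAt_hurwitzSeries (by omega) hx).const_mul _).deriv, Nat.factorial_succ]
    push_cast
    ring

theorem V_upper_bound_gt_one_general (m : ℕ) (hodd : Odd m) (α β : ℝ)
    (hα : 0 < α) (hαβ : α ≤ β) (t : ℝ) (ht : t ∈ Set.Ioi (1 : ℝ)) :
    iteratedDeriv m psi (α + t) / iteratedDeriv m psi (β + t) ≤
      iteratedDeriv m psi (α + 1) / iteratedDeriv m psi (β + 1) := by
  have hpsi : ∀ x > 0, iteratedDeriv m psi x = m.factorial * hurwitzSeries (m + 1) x :=
    fun x hx => by rw [iteratedDeriv_psi hodd.pos hx, hodd.add_one.neg_one_pow, one_mul]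
  have hfac : (m.factorial : ℝ) ≠ 0 := by positivity
  have ht1 : 1 < t := ht
  rw [hpsi _ (by linarith), hpsi _ (by linarith), hpsi _ (by linarith), hpsi _ (by linarith),
    mul_div_mul_left _ _ hfac, mul_div_mul_left _ _ hfac]
  exact antitoneOn_hurwitzSeries_div (by have := hodd.pos; omega) hαβ (mem_Ioi.2 (by linarith))
    (mem_Ioi.2 (by linarith)) ht1.le

theorem V_upper_bound_gt_one (m : ℕ) (hm : 0 < m) (hodd : Odd m) (α β : ℝ)
    (hα : 0 < α) (hαβ : α ≤ β) (t : ℝ) (ht : t ∈ Set.Ioi (1 : ℝ)) :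
    iteratedDeriv m psi (α + t) / iteratedDeriv m psi (β + t) ≤
      iteratedDeriv m psi (α + 1) / iteratedDeriv m psi (β + 1) :=
  V_upper_bound_gt_one_general m hodd α β hα hαβ t ht
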